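/- arXiv:2111.00384 — 2 statements merged into one kernel-verified Lean document; each statement's English description precedes it below -/
import Mathlib

section
/- Let p(X) be a monic real polynomial of degree d all of whose complex roots are real. Then the number of positive roots of p counted with multiplicity equals the number of sign changes (ignoring zeros) in the sequence of coefficients of p listed from the leading coefficient down to the constant term. -/
open Polynomial

/-- The number of sign changes of a finite sequence of real numbers: the number of
pairs of consecutive nonzero entries (after deleting all zero entries) having
opposite signs. -/
noncomputable def signChanges (l : List ℝ) : ℕ :=
  let l' := l.filter fun x => decide (x ≠ 0)
  (l'.zip l'.tail).countP fun p => decide (p.1 * p.2 < 0)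

/-- The coefficient sequence of a polynomial of degree `d`, listed from the leading
coefficient down to the constant term: `(coeff d, coeff (d-1), …, coeff 0)`. -/
noncomputable def coeffList (p : Polynomial ℝ) (d : ℕ) : List ℝ :=
  (List.range (d + 1)).map fun k => p.coeff (d - k)

/-!
Descartes' bound `Polynomial.roots_countP_pos_le_signVariations`, applied to `P` and to
`P(-X)`, bounds the numbers of positive and of negative roots by `V(P)` and `V(P(-X))`.
Conversely, for two consecutive nonzero coefficients of `P`, in degrees `m < n`, the
corresponding products of coefficients of `P` and of `P(-X)` differ by the factor
`(-1)^(n-m)`, so the pair contributes at most `n - m` sign changes to `V(P) + V(P(-X))`;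
summing, `V(P) + V(P(-X))` is at most `deg P` minus the multiplicity of the root `0`.
If `P` splits, `deg P` is the number of positive, negative and zero roots together, so
both of Descartes' bounds are equalities.
-/

section OrderedRing

variable {R : Type*} [Ring R] [LinearOrder R] [IsStrictOrderedRing R]

theorem sign_eq_neg_sign_iff_mul_neg {a b : R} (ha : a ≠ 0) :
    SignType.sign a = -SignType.sign b ↔ a * b < 0 := by
  rw [← sign_eq_neg_one_iff, sign_mul]
  rcases ha.lt_or_gt with ha | ha
  · rw [sign_neg ha]; cases SignType.sign b <;> decide
  · rw [sign_pos ha]; cases SignType.sign b <;> decide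

theorem mul_neg_iff_sign_ne {a b : R} (ha : a ≠ 0) (hb : b ≠ 0) :
    a * b < 0 ↔ SignType.sign a ≠ SignType.sign b := by
  rw [← sign_eq_neg_sign_iff_mul_neg ha]
  rcases ha.lt_or_gt with ha | ha <;> rcases hb.lt_or_gt with hb | hb <;>
    simp [sign_neg, sign_pos, ha, hb]

theorem ite_mul_neg_add_ite_neg_one_pow_mul_neg_le {a b : R} {m n : ℕ} (hmn : m < n) :
    (if a * b < 0 then 1 else 0) + (if (-1) ^ n * a * ((-1) ^ m * b) < 0 then 1 else 0) ≤
      n - m := by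
  rw [show (-1) ^ n * a * ((-1) ^ m * b) = (-1) ^ (n + m) * (a * b) by
    rw [mul_assoc, ← mul_assoc a, ← ((Commute.neg_one_left a).pow_left m).eq, pow_add,
      mul_assoc, mul_assoc]]
  rcases Nat.even_or_odd (n + m) with ⟨k, hk⟩ | hodd
  · have : 2 ≤ n - m := by omega
    split_ifs <;> omega
  · rw [hodd.neg_one_pow, neg_one_mul]
    split_ifs with h₁ h₂
    · exact absurd h₂ (neg_pos.mpr h₁).not_gt
    all_goals omega

end OrderedRing

theorem Multiset.countP_pos_add_countP_neg_add_count_zero {α : Type*} [LinearOrder α] [Zero α]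
    (s : Multiset α) : s.countP (0 < ·) + s.countP (· < 0) + s.count 0 = Multiset.card s := by
  induction s using Multiset.induction_on with
  | empty => simp
  | cons a s ih =>
    rcases lt_trichotomy a 0 with h | rfl | h
    · simp [h, h.not_gt, Multiset.count_cons_of_ne h.ne.symm]; omega
    · simp; omega
    · simp [h, h.not_gt, Multiset.count_cons_of_ne h.ne]; omega

theorem List.length_destutter'_ne {α : Type*} [DecidableEq α] (a : α) (l : List α) :
    (l.destutter' (· ≠ ·) a).length = ((a :: l).zip l).countP (fun p => p.1 ≠ p.2) + 1 := by
  induction l generalizing a with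
  | nil => simp
  | cons b l ih =>
    by_cases h : a = b
    · subst h; simp [ih]
    · simp [ih, h]

theorem List.length_destutter_ne_sub_one {α : Type*} [DecidableEq α] (l : List α) :
    (l.destutter (· ≠ ·)).length - 1 = (l.zip l.tail).countP (fun p => p.1 ≠ p.2) := by
  cases l with
  | nil => rfl
  | cons a l => simp [List.destutter_cons', List.length_destutter'_ne]

namespace Polynomial

section Ring

variable {R : Type*} [Ring R]

theorem coeff_comp_neg_X (p : R[X]) (n : ℕ) :
    (p.comp (-X)).coeff n = (-1) ^ n * p.coeff n := by
  rw [show (-X : R[X]) = C (-1) * X by simp, comp_C_mul_X_coeff,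
    ((Commute.neg_one_left _).pow_left n).eq]

theorem natDegree_comp_neg_X (p : R[X]) : (p.comp (-X)).natDegree = p.natDegree :=
  natDegree_eq_of_degree_eq degree_comp_neg_X

theorem eraseLead_comp_neg_X (p : R[X]) : (p.comp (-X)).eraseLead = p.eraseLead.comp (-X) := by
  ext n
  simp only [eraseLead_coeff, coeff_comp_neg_X, natDegree_comp_neg_X]
  split_ifs <;> simp

theorem natTrailingDegree_eraseLead {p : R[X]} (h : p.eraseLead ≠ 0) :
    p.eraseLead.natTrailingDegree = p.natTrailingDegree := by
  have hdeg : p.eraseLead.natDegree < p.natDegree :=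
    (eraseLead_natDegree_lt_or_eraseLead_eq_zero p).resolve_right h
  have hle : p.natTrailingDegree ≤ p.eraseLead.natTrailingDegree := by
    apply natTrailingDegree_le_of_ne_zero
    rw [← eraseLead_coeff_of_ne _ ((natTrailingDegree_le_natDegree _).trans_lt hdeg).ne]
    exact mt trailingCoeff_eq_zero.mp h
  refine le_antisymm (natTrailingDegree_le_of_ne_zero ?_) hle
  rw [eraseLead_coeff_of_ne _ (hle.trans_lt ((natTrailingDegree_le_natDegree _).trans_lt hdeg)).ne]
  exact mt trailingCoeff_eq_zero.mp (by rintro rfl; simp at h)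

end Ring

section OrderedRing

variable {R : Type*} [Ring R] [LinearOrder R] [IsStrictOrderedRing R]

theorem signVariations_add_signVariations_comp_neg_X_add_natTrailingDegree_le (P : R[X]) :
    P.signVariations + (P.comp (-X)).signVariations + P.natTrailingDegree ≤ P.natDegree := by
  induction hc : P.support.card generalizing P with
  | zero => simp [card_support_eq_zero.mp hc]
  | succ c ih =>
    have hP : P ≠ 0 := by rintro rfl; simp at hc
    have hQ : P.comp (-X) ≠ 0 := comp_neg_X_eq_zero_iff.not.mpr hP
    have hlc : P.leadingCoeff ≠ 0 := leadingCoeff_ne_zero.mpr hP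
    rw [signVariations_eq_eraseLead_add_ite hP, signVariations_eq_eraseLead_add_ite hQ,
      eraseLead_comp_neg_X, comp_neg_X_leadingCoeff_eq, comp_neg_X_leadingCoeff_eq]
    simp only [sign_eq_neg_sign_iff_mul_neg hlc,
      sign_eq_neg_sign_iff_mul_neg (show (-1) ^ P.natDegree * P.leadingCoeff ≠ 0 by simpa)]
    by_cases hP' : P.eraseLead = 0
    · simp [hP', natTrailingDegree_le_natDegree]
    · have hmn := (eraseLead_natDegree_lt_or_eraseLead_eq_zero P).resolve_right hP'
      have h_erase := ih P.eraseLead (card_support_eraseLead' hc)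
      have h_step := ite_mul_neg_add_ite_neg_one_pow_mul_neg_le (a := P.leadingCoeff)
        (b := P.eraseLead.leadingCoeff) hmn
      rw [natTrailingDegree_eraseLead hP'] at h_erase
      omega

end OrderedRing

section CommRing

variable {R : Type*} [CommRing R] [LinearOrder R] [IsStrictOrderedRing R]

theorem Splits.roots_countP_pos_eq_signVariations {P : R[X]} (hP : P.Splits) :
    P.roots.countP (0 < ·) = P.signVariations := by
  have h_pos := roots_countP_pos_le_signVariations P
  have h_neg : P.roots.countP (· < 0) ≤ (P.comp (-X)).signVariations := by
    have h := roots_countP_pos_le_signVariations (P.comp (-X))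
    rw [roots_comp_neg_X, Multiset.countP_map, ← Multiset.countP_eq_card_filter] at h
    simpa only [neg_pos] using h
  have h_upper := signVariations_add_signVariations_comp_neg_X_add_natTrailingDegree_le P
  have h_zero : P.roots.count 0 = P.natTrailingDegree := by
    rw [count_roots, rootMultiplicity_eq_natTrailingDegree']
  have h_card := P.roots.countP_pos_add_countP_neg_add_count_zero
  rw [← hP.natDegree_eq_card_roots] at h_card
  omega

end CommRing

end Polynomial

theorem signChanges_eq_length_destutter (l : List ℝ) :
    signChanges l =
      (((l.map SignType.sign).filter (· ≠ 0)).destutter (· ≠ ·)).length - 1 := by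
  rw [List.filter_map, List.length_destutter_ne_sub_one, signChanges]
  simp only [Function.comp_def, ne_eq, sign_eq_zero_iff]
  set l' := l.filter fun x => decide (x ≠ 0)
  rw [← List.map_tail, List.zip_map, List.countP_map]
  refine List.countP_congr fun q hq => ?_
  have h_ne : ∀ x ∈ l', x ≠ 0 := fun x hx => by simpa using (List.mem_filter.mp hx).2
  have h := List.of_mem_zip hq
  simp [mul_neg_iff_sign_ne (h_ne _ h.1) (h_ne _ (List.mem_of_mem_tail h.2))]

theorem Polynomial.signVariations_eq_signChanges (p : ℝ[X]) :
    p.signVariations = signChanges p.coeffList :=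
  (signChanges_eq_length_destutter _).symm

theorem coeffList_natDegree {p : ℝ[X]} (hp : p ≠ 0) :
    coeffList p p.natDegree = p.coeffList := by
  rw [Polynomial.coeffList, withBotSucc_degree_eq_natDegree_add_one hp, List.range_eq_range',
    List.reverse_range', List.map_map]
  simp [_root_.coeffList, Function.comp_def]

/-- **Descartes' rule of signs (case of equality).** Let `p` be a monic real polynomial
of degree `d` all of whose complex roots are real. Then the number of positive roots
of `p` counted with multiplicity equals the number of sign changes in the sequence of
coefficients of `p` listed from the leading coefficient down to the constant term. -/
theorem descartes_rule_of_signs_real_rooted (p : Polynomial ℝ) (d : ℕ)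
    (hmonic : p.Monic) (hdeg : p.natDegree = d)
    (hreal : ∀ z ∈ (p.map (algebraMap ℝ ℂ)).roots, z.im = 0) :
    (p.roots.filter fun x => 0 < x).card = signChanges (coeffList p d) := by
  have hsplit : p.Splits :=
    Splits.of_splits_map_of_injective (algebraMap ℝ ℂ).injective (IsAlgClosed.splits _)
      fun z hz => ⟨z.re, Complex.ext (by simp) (by simp [hreal z hz])⟩
  rw [← Multiset.countP_eq_card_filter, hsplit.roots_countP_pos_eq_signVariations, ← hdeg,
    coeffList_natDegree hmonic.ne_zero, signVariations_eq_signChanges]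
end

section
/- For all real θ₁, θ₄, θ₇, let T = T₁(θ₁)·T₂·T₃·T₄(θ₄)·T₅·T₆·T₇(θ₇)·T₈ be the product of the eight 4×4 homogeneous transformation matrices of the EV3 manipulator. Then the (1,4), (2,4) and (3,4) entries of T (the position of the end-effector) are, respectively: x = −112 cos θ₁ cos θ₄ sin θ₇ + 16 cos θ₁ cos θ₄ − 112 cos θ₁ sin θ₄ cos θ₇ − 136 cos θ₁ sin θ₄ + 44√2 cos θ₁; y = −112 sin θ₁ cos θ₄ sin θ₇ + 16 sin θ₁ cos θ₄ − 112 sin θ₁ sin θ₄ cos θ₇ − 136 sin θ₁ sin θ₄ + 44√2 sin θ₁; z = 112 cos θ₄ cos θ₇ + 136 cos θ₄ − 112 sin θ₄ sin θ₇ + 16 sin θ₄ + 104 + 44√2. -/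
open Real Matrix

/-- The Denavit–Hartenberg transformation matrix `⁰T₁(θ₁)` of the EV3 manipulator. -/
noncomputable def T1 (θ1 : ℝ) : Matrix (Fin 4) (Fin 4) ℝ :=
  !![cos θ1, -sin θ1, 0, 0; sin θ1, cos θ1, 0, 0; 0, 0, 1, 80; 0, 0, 0, 1]

/-- The Denavit–Hartenberg transformation matrix `¹T₂` of the EV3 manipulator. -/
noncomputable def T2 : Matrix (Fin 4) (Fin 4) ℝ :=
  !![Real.sqrt 2 / 2, -(Real.sqrt 2) / 2, 0, 0; 0, 0, -1, 0;
     Real.sqrt 2 / 2, Real.sqrt 2 / 2, 0, 0; 0, 0, 0, 1]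

/-- The Denavit–Hartenberg transformation matrix `²T₃` of the EV3 manipulator. -/
noncomputable def T3 : Matrix (Fin 4) (Fin 4) ℝ :=
  !![Real.sqrt 2 / 2, -(Real.sqrt 2) / 2, 0, 88;
     Real.sqrt 2 / 2, Real.sqrt 2 / 2, 0, 0; 0, 0, 1, 0; 0, 0, 0, 1]

/-- The Denavit–Hartenberg transformation matrix `³T₄(θ₄)` of the EV3 manipulator. -/
noncomputable def T4 (θ4 : ℝ) : Matrix (Fin 4) (Fin 4) ℝ :=
  !![cos θ4, -sin θ4, 0, 24; sin θ4, cos θ4, 0, 0; 0, 0, 1, 0; 0, 0, 0, 1]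

/-- The Denavit–Hartenberg transformation matrix `⁴T₅` of the EV3 manipulator. -/
def T5 : Matrix (Fin 4) (Fin 4) ℝ :=
  !![0, 1, 0, 96; -1, 0, 0, 0; 0, 0, 1, 0; 0, 0, 0, 1]

/-- The Denavit–Hartenberg transformation matrix `⁵T₆` of the EV3 manipulator. -/
def T6 : Matrix (Fin 4) (Fin 4) ℝ :=
  !![0, -1, 0, 16; 1, 0, 0, 0; 0, 0, 1, 0; 0, 0, 0, 1]

/-- The Denavit–Hartenberg transformation matrix `⁶T₇(θ₇)` of the EV3 manipulator. -/
noncomputable def T7 (θ7 : ℝ) : Matrix (Fin 4) (Fin 4) ℝ :=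
  !![cos θ7, -sin θ7, 0, 40; sin θ7, cos θ7, 0, 0; 0, 0, 1, 0; 0, 0, 0, 1]

/-- The Denavit–Hartenberg transformation matrix `⁷T₈` of the EV3 manipulator. -/
def T8 : Matrix (Fin 4) (Fin 4) ℝ :=
  !![1, 0, 0, 112; 0, 1, 0, 0; 0, 0, 1, 0; 0, 0, 0, 1]

/-! The end-effector position is the translation column of the product, i.e. the image of the
homogeneous origin `(0, 0, 0, 1)` of the last frame, so it suffices to push one vector through
the chain instead of multiplying eight matrices. The joints `θ₄` and `θ₇` act in one plane, giving
a planar point that the constant block `T₂ T₃` lifts into space: its two 45° rotations compose to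
a signed permutation of the axes (this is where `√2 · √2 = 2` enters), after which `T₁` rotates the
result about the vertical axis. -/

theorem Matrix.apply_three_eq_mulVec {m R : Type*} [NonAssocSemiring R]
    (M : Matrix m (Fin 4) R) (i : m) : M i 3 = (M *ᵥ ![0, 0, 0, 1]) i := by
  simp [mulVec, dotProduct, Fin.sum_univ_four]

theorem T2_mul_T3 :
    T2 * T3 = !![0, -1, 0, 44 * √2; 0, 0, -1, 0; 1, 0, 0, 44 * √2; 0, 0, 0, 1] := by
  have h : √2 * √2 = 2 := mul_self_sqrt zero_le_two
  ext i j
  fin_cases i <;> fin_cases j <;>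
    simp [T2, T3, mul_apply, Fin.sum_univ_four, div_mul_div_comm, neg_div, h] <;> ring

theorem T4_mul_T5_mul_T6_mul_T7_mul_T8_mulVec (θ4 θ7 : ℝ) :
    (T4 θ4 * T5 * T6 * T7 θ7 * T8) *ᵥ ![0, 0, 0, 1] =
      ![112 * cos θ4 * cos θ7 - 112 * sin θ4 * sin θ7 + 136 * cos θ4 + 16 * sin θ4 + 24,
        112 * sin θ4 * cos θ7 + 112 * cos θ4 * sin θ7 + 136 * sin θ4 - 16 * cos θ4, 0, 1] := by
  simp only [← mulVec_mulVec, T4, T5, T6, T7, T8, cons_mulVec, cons_dotProduct_cons,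
    dotProduct_of_isEmpty, empty_mulVec]
  ring_nf

/-- **Forward kinematics of the EV3 manipulator.** The (1,4), (2,4), (3,4) entries of
`T = T₁(θ₁)·T₂·T₃·T₄(θ₄)·T₅·T₆·T₇(θ₇)·T₈` give the position `(x, y, z)` of the
end-effector. -/
theorem ev3_forward_kinematics (θ1 θ4 θ7 : ℝ) :
    (T1 θ1 * T2 * T3 * T4 θ4 * T5 * T6 * T7 θ7 * T8) 0 3
        = -112 * cos θ1 * cos θ4 * sin θ7 + 16 * cos θ1 * cos θ4
          - 112 * cos θ1 * sin θ4 * cos θ7 - 136 * cos θ1 * sin θ4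
          + 44 * Real.sqrt 2 * cos θ1 ∧
    (T1 θ1 * T2 * T3 * T4 θ4 * T5 * T6 * T7 θ7 * T8) 1 3
        = -112 * sin θ1 * cos θ4 * sin θ7 + 16 * sin θ1 * cos θ4
          - 112 * sin θ1 * sin θ4 * cos θ7 - 136 * sin θ1 * sin θ4
          + 44 * Real.sqrt 2 * sin θ1 ∧
    (T1 θ1 * T2 * T3 * T4 θ4 * T5 * T6 * T7 θ7 * T8) 2 3
        = 112 * cos θ4 * cos θ7 + 136 * cos θ4 - 112 * sin θ4 * sin θ7
          + 16 * sin θ4 + 104 + 44 * Real.sqrt 2 := by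
  have hT : T1 θ1 * T2 * T3 * T4 θ4 * T5 * T6 * T7 θ7 * T8 =
      T1 θ1 * (T2 * T3) * (T4 θ4 * T5 * T6 * T7 θ7 * T8) := by
    simp only [Matrix.mul_assoc]
  rw [hT]
  simp only [apply_three_eq_mulVec]
  rw [← mulVec_mulVec _ (T1 θ1 * (T2 * T3)), T4_mul_T5_mul_T6_mul_T7_mul_T8_mulVec, T2_mul_T3,
    ← mulVec_mulVec]
  simp only [T1, cons_mulVec, cons_dotProduct_cons, dotProduct_of_isEmpty, empty_mulVec,
    cons_val_zero, cons_val_one, cons_val_two, tail_cons, head_cons]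
  refine ⟨by ring, by ring, by ring⟩
end
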